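/- For any finite collection of events E_1, ..., E_N in a probability space, P(⋃_{j=1}^N E_j) ≤ Σ_{j=1}^N P(E_j) − Σ_{j=1}^{N−1} P(E_j ∩ E_{j+1}). -/

import Mathlib

/-!
Adding `E (n + 1)` to `A = E 1 ∪ ⋯ ∪ E n` increases the measure by
`μ (E (n + 1)) - μ (A ∩ E (n + 1))`, which is at most `μ (E (n + 1)) - μ (E n ∩ E (n + 1))`
because `E n ⊆ A`; summing these increments gives the bound.
-/

open MeasureTheory ProbabilityTheory Finset ENNReal

namespace MeasureTheory

variable {Ω : Type*} [MeasurableSpace Ω] (μ : Measure Ω)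

lemma measure_union_add_inter_le_of_subset {A B C : Set Ω} (hA : MeasurableSet A) (hCA : C ⊆ A) :
    μ (A ∪ B) + μ (C ∩ B) ≤ μ A + μ B :=
  calc μ (A ∪ B) + μ (C ∩ B) ≤ μ (A ∪ B) + μ (A ∩ B) := by gcongr
    _ = μ A + μ B := measure_union_add_inter' hA B

lemma measure_biUnion_range_add_sum_inter_succ_le (E : ℕ → Set Ω)
    (hE : ∀ i, MeasurableSet (E i)) (n : ℕ) :
    μ (⋃ i ∈ range (n + 1), E i) + ∑ i ∈ range n, μ (E i ∩ E (i + 1))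
      ≤ ∑ i ∈ range (n + 1), μ (E i) := by
  induction n with
  | zero => simp
  | succ n ih =>
    set A := ⋃ i ∈ range (n + 1), E i
    have hA : MeasurableSet A := measurableSet_biUnion _ fun i _ ↦ hE i
    have hEA : E n ⊆ A := subset_set_biUnion_of_mem (f := E) (mem_range.2 n.lt_succ_self)
    have hU : ⋃ i ∈ range (n + 2), E i = A ∪ E (n + 1) := by
      rw [range_add_one, set_biUnion_insert, Set.union_comm]
    calc μ (⋃ i ∈ range (n + 2), E i) + ∑ i ∈ range (n + 1), μ (E i ∩ E (i + 1))
        = (μ (A ∪ E (n + 1)) + μ (E n ∩ E (n + 1))) + ∑ i ∈ range n, μ (E i ∩ E (i + 1)) := by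
          rw [hU, sum_range_succ]; ring
      _ ≤ (μ A + μ (E (n + 1))) + ∑ i ∈ range n, μ (E i ∩ E (i + 1)) := by
          grw [measure_union_add_inter_le_of_subset μ hA hEA]
      _ = (μ A + ∑ i ∈ range n, μ (E i ∩ E (i + 1))) + μ (E (n + 1)) := by ring
      _ ≤ ∑ i ∈ range (n + 2), μ (E i) := by
          rw [sum_range_succ _ (n + 1)]; gcongr

lemma measureReal_biUnion_range_le_sum_sub_sum_inter_succ [IsFiniteMeasure μ] (E : ℕ → Set Ω)
    (hE : ∀ i, MeasurableSet (E i)) (n : ℕ) :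
    μ.real (⋃ i ∈ range (n + 1), E i)
      ≤ ∑ i ∈ range (n + 1), μ.real (E i) - ∑ i ∈ range n, μ.real (E i ∩ E (i + 1)) := by
  have hsum (F : ℕ → Set Ω) (s : Finset ℕ) : ∑ i ∈ s, μ (F i) ≠ ∞ :=
    ENNReal.sum_ne_top.2 fun i _ ↦ measure_ne_top μ (F i)
  have h := measure_biUnion_range_add_sum_inter_succ_le μ E hE n
  rw [← ENNReal.toReal_le_toReal (add_ne_top.2 ⟨measure_ne_top _ _, hsum _ _⟩) (hsum _ _),
    ENNReal.toReal_add (measure_ne_top _ _) (hsum _ _),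
    ENNReal.toReal_sum fun i _ ↦ measure_ne_top _ _,
    ENNReal.toReal_sum fun i _ ↦ measure_ne_top _ _] at h
  simp only [measureReal_def]
  linarith

end MeasureTheory

lemma Finset.Icc_one_eq_map_range (n : ℕ) : Icc 1 n = (range n).map (addRightEmbedding 1) := by
  rw [range_eq_Ico, map_add_right_Ico, zero_add, Ico_add_one_right_eq_Icc]

/-- Hunter's inequality (chain variant), sharpening Boole's inequality by
subtracting the probabilities of intersections of consecutive events. -/
theorem hunters_inequality {Ω : Type*} [MeasureSpace Ω]
    [IsProbabilityMeasure (ℙ : Measure Ω)] (N : ℕ) (E : ℕ → Set Ω)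
    (hE : ∀ j, MeasurableSet (E j)) :
    (ℙ (⋃ j ∈ Finset.Icc 1 N, E j)).toReal ≤
      ∑ j ∈ Finset.Icc 1 N, (ℙ (E j)).toReal
        - ∑ j ∈ Finset.Icc 1 (N - 1), (ℙ (E j ∩ E (j + 1))).toReal := by
  rcases N with _ | n
  · simp
  have h := measureReal_biUnion_range_le_sum_sub_sum_inter_succ ℙ (fun i ↦ E (i + 1))
    (fun i ↦ hE (i + 1)) n
  rw [Nat.add_sub_cancel, Icc_one_eq_map_range, Icc_one_eq_map_range, sum_map, sum_map,
    map_eq_image, set_biUnion_finset_image]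
  simpa only [measureReal_def, addRightEmbedding_apply] using h
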